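/- If σ is a Hopf 2-cocycle on a Hopf algebra A, then the twisted multiplication x · y = Σ σ(x₍₁₎, y₍₁₎) x₍₂₎ y₍₂₎ σ⁻¹(x₍₃₎, y₍₃₎) is associative and has 1 as a unit, and the original comultiplication and counit make the resulting object A_σ a bialgebra. -/

import Mathlib

open TensorProduct

noncomputable section

/-- Convolution product of two `k`-valued linear functionals on a coalgebra:
`(f * g)(x) = Σ f(x₍₁₎) g(x₍₂₎)`. -/
def conv {k C : Type} [Field k] [AddCommGroup C] [Module k C] [Coalgebra k C]
    (f g : C →ₗ[k] k) : C →ₗ[k] k :=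
  (TensorProduct.lid k k).toLinearMap ∘ₗ TensorProduct.map f g ∘ₗ Coalgebra.comul

variable {k H : Type} [Field k] [Ring H] [HopfAlgebra k H]

/-- The linear map `x ⊗ y ⊗ z ↦ σ(x ⊗ y)·ε(z)`. -/
def sigmaEps (σ : H ⊗[k] H →ₗ[k] k) : H ⊗[k] (H ⊗[k] H) →ₗ[k] k :=
  (TensorProduct.lid k k).toLinearMap ∘ₗ TensorProduct.map σ Coalgebra.counit
    ∘ₗ (TensorProduct.assoc k H H H).symm.toLinearMap

/-- The linear map `x ⊗ y ⊗ z ↦ σ((x·y) ⊗ z)`. -/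
def sigmaMul (σ : H ⊗[k] H →ₗ[k] k) : H ⊗[k] (H ⊗[k] H) →ₗ[k] k :=
  σ ∘ₗ TensorProduct.map (LinearMap.mul' k H) LinearMap.id
    ∘ₗ (TensorProduct.assoc k H H H).symm.toLinearMap

/-- The linear map `x ⊗ y ⊗ z ↦ ε(x)·σ(y ⊗ z)`. -/
def epsSigma (σ : H ⊗[k] H →ₗ[k] k) : H ⊗[k] (H ⊗[k] H) →ₗ[k] k :=
  (TensorProduct.lid k k).toLinearMap ∘ₗ TensorProduct.map Coalgebra.counit σ

/-- The linear map `x ⊗ y ⊗ z ↦ σ(x ⊗ (y·z))`. -/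
def mulSigma (σ : H ⊗[k] H →ₗ[k] k) : H ⊗[k] (H ⊗[k] H) →ₗ[k] k :=
  σ ∘ₗ TensorProduct.map LinearMap.id (LinearMap.mul' k H)

/-- A Hopf 2-cocycle on `H`: convolution-invertible, normalized, satisfying
`Σ σ(x₍₁₎, y₍₁₎) σ(x₍₂₎y₍₂₎, z) = Σ σ(y₍₁₎, z₍₁₎) σ(x, y₍₂₎z₍₂₎)`. -/
def IsHopfTwoCocycle (σ : H ⊗[k] H →ₗ[k] k) : Prop :=
  (∃ τ : H ⊗[k] H →ₗ[k] k, conv σ τ = Coalgebra.counit ∧ conv τ σ = Coalgebra.counit) ∧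
  σ (1 ⊗ₜ[k] 1) = 1 ∧
  conv (sigmaEps σ) (sigmaMul σ) = conv (epsSigma σ) (mulSigma σ)

/-- The twisted multiplication `x · y = Σ σ(x₍₁₎, y₍₁₎) x₍₂₎ y₍₂₎ σ⁻¹(x₍₃₎, y₍₃₎)`
as a linear map `H ⊗ H → H`, where the Sweedler legs come from the tensor-product
coalgebra structure on `H ⊗ H`. -/
def twistedMul (σ σinv : H ⊗[k] H →ₗ[k] k) : H ⊗[k] H →ₗ[k] H :=
  (TensorProduct.lid k H).toLinearMap ∘ₗ
    TensorProduct.map σ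
      ((TensorProduct.rid k H).toLinearMap ∘ₗ
        TensorProduct.map (LinearMap.mul' k H) σinv) ∘ₗ
    LinearMap.lTensor (H ⊗[k] H) (Coalgebra.comul (R := k) (A := H ⊗[k] H)) ∘ₗ
    Coalgebra.comul (R := k) (A := H ⊗[k] H)


set_option linter.unusedSectionVars false
namespace TwistAux

open Coalgebra LinearMap TensorProduct

variable {k : Type} [Field k]

section Conv

variable {C : Type} [AddCommGroup C] [Module k C] [Coalgebra k C]
variable {D : Type} [AddCommGroup D] [Module k D] [Coalgebra k D]
variable {A : Type} [Ring A] [Algebra k A]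
variable {B : Type} [Ring B] [Algebra k B]
variable {ι κ : Type*}

/-- Convolution product with values in an algebra. -/
noncomputable def cv (f g : C →ₗ[k] A) : C →ₗ[k] A :=
  LinearMap.mul' k A ∘ₗ TensorProduct.map f g ∘ₗ Coalgebra.comul

/-- Embedding of scalar-valued maps. -/
noncomputable def eA (α : C →ₗ[k] k) : C →ₗ[k] A :=
  Algebra.linearMap k A ∘ₗ α

@[simp] lemma eA_apply (α : C →ₗ[k] k) (x : C) : (eA (A := A) α) x = α x • (1 : A) := by
  simp [eA, Algebra.algebraMap_eq_smul_one]

lemma eA_k (α : C →ₗ[k] k) : (eA (A := k) α) = α := by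
  ext x; simp

lemma cv_apply {a : C} (f g : C →ₗ[k] A) (r : Coalgebra.Repr k a ι) :
    cv f g a = ∑ i ∈ r.index, f (r.left i) * g (r.right i) := by
  simp only [cv, LinearMap.comp_apply, ← r.eq, map_sum, TensorProduct.map_tmul,
    LinearMap.mul'_apply]

lemma repr_smul_counit {a : C} (r : Coalgebra.Repr k a ι) :
    ∑ i ∈ r.index, Coalgebra.counit (R := k) (r.left i) • r.right i = a := by
  have h := congrArg (TensorProduct.lid k C) (Coalgebra.sum_counit_tmul_eq r)
  rw [map_sum] at h
  simp only [TensorProduct.lid_tmul] at h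
  simpa using h

lemma repr_smul_counit' {a : C} (r : Coalgebra.Repr k a ι) :
    ∑ i ∈ r.index, Coalgebra.counit (R := k) (r.right i) • r.left i = a := by
  have h := congrArg (TensorProduct.rid k C) (Coalgebra.sum_tmul_counit_eq r)
  rw [map_sum] at h
  simp only [TensorProduct.rid_tmul] at h
  simpa using h

lemma repr_counit_mul {a : C} (r : Coalgebra.Repr k a ι) :
    ∑ i ∈ r.index, Coalgebra.counit (R := k) (r.left i) * Coalgebra.counit (R := k) (r.right i)
      = Coalgebra.counit (R := k) a := by
  have := congrArg (Coalgebra.counit (R := k)) (repr_smul_counit r)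
  simpa [map_sum, smul_eq_mul] using this

lemma cv_assoc (f g h : C →ₗ[k] A) : cv (cv f g) h = cv f (cv g h) := by
  ext a
  set r := ℛ k a
  set r1 : (i : r.ι) → Coalgebra.Repr k (r.left i) (C × C) := fun i => ℛ k (r.left i)
  set r2 : (i : r.ι) → Coalgebra.Repr k (r.right i) (C × C) := fun i => ℛ k (r.right i)
  have key := Coalgebra.sum_tmul_tmul_eq r r1 r2
  have key2 := congrArg (LinearMap.mul' k A ∘ₗ TensorProduct.map f (LinearMap.mul' k A ∘ₗ
    TensorProduct.map g h)) key
  simp only [map_sum, LinearMap.comp_apply, TensorProduct.map_tmul, LinearMap.mul'_apply] at key2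
  rw [cv_apply (cv f g) h r, cv_apply f (cv g h) r]
  calc ∑ i ∈ r.index, cv f g (r.left i) * h (r.right i)
      = ∑ i ∈ r.index, ∑ j ∈ (r1 i).index,
          f ((r1 i).left j) * ((g ((r1 i).right j)) * h (r.right i)) := by
        refine Finset.sum_congr rfl fun i _ => ?_
        rw [cv_apply f g (r1 i), Finset.sum_mul]
        exact Finset.sum_congr rfl fun j _ => mul_assoc _ _ _
    _ = ∑ i ∈ r.index, ∑ j ∈ (r2 i).index,
          f (r.left i) * (g ((r2 i).left j) * h ((r2 i).right j)) := key2
    _ = ∑ i ∈ r.index, f (r.left i) * cv g h (r.right i) := by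
        refine Finset.sum_congr rfl fun i _ => ?_
        rw [cv_apply g h (r2 i), Finset.mul_sum]

lemma cv_unit_left (f : C →ₗ[k] A) : cv (eA Coalgebra.counit) f = f := by
  ext a
  set r := ℛ k a
  rw [cv_apply _ f r]
  calc ∑ i ∈ r.index, eA (A := A) Coalgebra.counit (r.left i) * f (r.right i)
      = ∑ i ∈ r.index, Coalgebra.counit (R := k) (r.left i) • f (r.right i) := by
        refine Finset.sum_congr rfl fun i _ => ?_
        rw [eA_apply, smul_mul_assoc, one_mul]
    _ = f a := by
        simp only [← map_smul]
        rw [← map_sum, repr_smul_counit r]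

lemma cv_unit_right (f : C →ₗ[k] A) : cv f (eA Coalgebra.counit) = f := by
  ext a
  set r := ℛ k a
  rw [cv_apply f _ r]
  calc ∑ i ∈ r.index, f (r.left i) * eA (A := A) Coalgebra.counit (r.right i)
      = ∑ i ∈ r.index, Coalgebra.counit (R := k) (r.right i) • f (r.left i) := by
        refine Finset.sum_congr rfl fun i _ => ?_
        rw [eA_apply, mul_smul_comm, mul_one]
    _ = f a := by
        simp only [← map_smul]
        rw [← map_sum, repr_smul_counit' r]

end Conv
end TwistAux
namespace TwistAux
open Coalgebra LinearMap TensorProduct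

variable {k : Type} [Field k]

section Conv2
variable {C : Type} [AddCommGroup C] [Module k C] [Coalgebra k C]
variable {D : Type} [AddCommGroup D] [Module k D] [Coalgebra k D]
variable {A : Type} [Ring A] [Algebra k A]
variable {B : Type} [Ring B] [Algebra k B]
variable {ι κ : Type*}

lemma lid_eq_mul' : (TensorProduct.lid k k).toLinearMap = LinearMap.mul' k k := by
  apply TensorProduct.ext'
  intro a b
  simp [smul_eq_mul]

lemma conv_eq (f g : C →ₗ[k] k) : conv f g = cv f g := by
  unfold conv cv
  rw [lid_eq_mul']

lemma conv_apply {a : C} (f g : C →ₗ[k] k) (r : Coalgebra.Repr k a ι) :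
    conv f g a = ∑ i ∈ r.index, f (r.left i) * g (r.right i) := by
  rw [conv_eq]; exact cv_apply f g r

lemma conv_assoc (f g h : C →ₗ[k] k) : conv (conv f g) h = conv f (conv g h) := by
  simp only [conv_eq]; exact cv_assoc f g h

lemma conv_unit_left (f : C →ₗ[k] k) : conv Coalgebra.counit f = f := by
  rw [conv_eq, ← eA_k (Coalgebra.counit (R := k) (A := C))]
  exact cv_unit_left f

lemma conv_unit_right (f : C →ₗ[k] k) : conv f Coalgebra.counit = f := by
  rw [conv_eq, ← eA_k (Coalgebra.counit (R := k) (A := C))]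
  exact cv_unit_right f

lemma eA_conv (α β : C →ₗ[k] k) : (eA (conv α β) : C →ₗ[k] A) = cv (eA α) (eA β) := by
  ext a
  set r := ℛ k a
  rw [cv_apply _ _ r, eA_apply, conv_apply α β r]
  rw [Finset.sum_smul]
  refine Finset.sum_congr rfl fun i _ => ?_
  rw [eA_apply, eA_apply, smul_mul_smul_comm, one_mul]

/-- A linear map that is a morphism of coalgebras. -/
structure CoalgMor (φ : C →ₗ[k] D) : Prop where
  comul_comp : Coalgebra.comul ∘ₗ φ = TensorProduct.map φ φ ∘ₗ Coalgebra.comul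
  counit_comp : Coalgebra.counit ∘ₗ φ = Coalgebra.counit

/-- Push a representation along a coalgebra morphism. -/
noncomputable def pushRepr {φ : C →ₗ[k] D} (hφ : CoalgMor φ) {a : C} (r : Coalgebra.Repr k a ι) :
    Coalgebra.Repr k (φ a) ι where
  index := r.index
  left := fun i => φ (r.left i)
  right := fun i => φ (r.right i)
  eq := by
    have h1 := congrFun (congrArg DFunLike.coe hφ.comul_comp) a
    simp only [LinearMap.comp_apply] at h1
    rw [h1, ← r.eq, map_sum]
    simp [TensorProduct.map_tmul]

lemma cv_comp {φ : C →ₗ[k] D} (hφ : CoalgMor φ) (f g : D →ₗ[k] A) :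
    cv f g ∘ₗ φ = cv (f ∘ₗ φ) (g ∘ₗ φ) := by
  ext a
  set r := ℛ k a
  simp only [LinearMap.comp_apply]
  rw [cv_apply f g (pushRepr hφ r), cv_apply (f ∘ₗ φ) (g ∘ₗ φ) r]
  rfl

lemma conv_comp {φ : C →ₗ[k] D} (hφ : CoalgMor φ) (f g : D →ₗ[k] k) :
    conv f g ∘ₗ φ = conv (f ∘ₗ φ) (g ∘ₗ φ) := by
  simp only [conv_eq]; exact cv_comp hφ f g

lemma counit_comp_eq {φ : C →ₗ[k] D} (hφ : CoalgMor φ) :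
    (Coalgebra.counit : D →ₗ[k] k) ∘ₗ φ = Coalgebra.counit := hφ.counit_comp

lemma eA_comp (α : D →ₗ[k] k) (φ : C →ₗ[k] D) :
    (eA α : D →ₗ[k] A) ∘ₗ φ = eA (α ∘ₗ φ) := rfl

/-- Postcomposition with an algebra morphism. -/
lemma algHom_cv (θ : A →ₐ[k] B) (f g : C →ₗ[k] A) :
    θ.toLinearMap ∘ₗ cv f g = cv (θ.toLinearMap ∘ₗ f) (θ.toLinearMap ∘ₗ g) := by
  ext a
  set r := ℛ k a
  simp only [LinearMap.comp_apply]
  rw [cv_apply f g r, cv_apply _ _ r, map_sum]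
  simp [map_mul]

lemma algHom_eA (θ : A →ₐ[k] B) (α : C →ₗ[k] k) :
    θ.toLinearMap ∘ₗ (eA α : C →ₗ[k] A) = eA α := by
  ext a
  simp [map_smul, map_one]

lemma coalgMor_comp {φ : C →ₗ[k] D} {E : Type} [AddCommGroup E] [Module k E] [Coalgebra k E]
    {ψ : D →ₗ[k] E} (hψ : CoalgMor ψ) (hφ : CoalgMor φ) : CoalgMor (ψ ∘ₗ φ) := by
  constructor
  · rw [← LinearMap.comp_assoc, hψ.comul_comp, LinearMap.comp_assoc, hφ.comul_comp,
      ← LinearMap.comp_assoc, ← TensorProduct.map_comp]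
  · rw [← LinearMap.comp_assoc, hψ.counit_comp, hφ.counit_comp]

lemma coalgMor_id : CoalgMor (LinearMap.id : C →ₗ[k] C) := by
  constructor
  · simp [TensorProduct.map_id]
  · simp

end Conv2
end TwistAux
namespace TwistAux
open Coalgebra LinearMap TensorProduct

variable {k : Type} [Field k]

section TensorCoalg
variable {C : Type} [AddCommGroup C] [Module k C] [Coalgebra k C]
variable {D : Type} [AddCommGroup D] [Module k D] [Coalgebra k D]
variable {C' : Type} [AddCommGroup C'] [Module k C'] [Coalgebra k C']
variable {D' : Type} [AddCommGroup D'] [Module k D'] [Coalgebra k D']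
variable {ι κ : Type*}

lemma comul_tmul (x : C) (w : D) :
    Coalgebra.comul (R := k) (x ⊗ₜ[k] w) =
      TensorProduct.tensorTensorTensorComm k C C D D
        (Coalgebra.comul (R := k) x ⊗ₜ[k] Coalgebra.comul (R := k) w) := rfl

lemma counit_tmul (x : C) (w : D) :
    Coalgebra.counit (R := k) (x ⊗ₜ[k] w) =
      Coalgebra.counit (R := k) x * Coalgebra.counit (R := k) w := by
  rw [TensorProduct.counit_tmul, smul_eq_mul, mul_comm]

/-- Product representation for a pure tensor in the tensor-product coalgebra. -/
noncomputable def Repr.prod {x : C} {w : D} (rx : Coalgebra.Repr k x ι) (rw : Coalgebra.Repr k w κ) :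
    Coalgebra.Repr k (x ⊗ₜ[k] w) (ι × κ) where
  index := rx.index ×ˢ rw.index
  left := fun p => rx.left p.1 ⊗ₜ[k] rw.left p.2
  right := fun p => rx.right p.1 ⊗ₜ[k] rw.right p.2
  eq := by
    rw [comul_tmul, ← rx.eq, ← rw.eq]
    rw [TensorProduct.sum_tmul]
    rw [map_sum]
    rw [Finset.sum_product]
    refine Finset.sum_congr rfl fun i _ => ?_
    rw [TensorProduct.tmul_sum, map_sum]
    refine Finset.sum_congr rfl fun j _ => ?_
    simp [TensorProduct.tensorTensorTensorComm_tmul]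

lemma coalgMor_map {φ : C →ₗ[k] D} {ψ : C' →ₗ[k] D'} (hφ : CoalgMor φ) (hψ : CoalgMor ψ) :
    CoalgMor (TensorProduct.map φ ψ) := by
  constructor
  · apply TensorProduct.ext'
    intro x w
    set rx := ℛ k x
    set rw := ℛ k w
    simp only [LinearMap.comp_apply, TensorProduct.map_tmul]
    rw [← (Repr.prod (pushRepr hφ rx) (pushRepr hψ rw)).eq, ← (Repr.prod rx rw).eq]
    simp only [map_sum]
    rfl
  · apply TensorProduct.ext'
    intro x w
    have h1 : Coalgebra.counit (R := k) (φ x) = Coalgebra.counit (R := k) x := by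
      simpa using LinearMap.congr_fun hφ.counit_comp x
    have h2 : Coalgebra.counit (R := k) (ψ w) = Coalgebra.counit (R := k) w := by
      simpa using LinearMap.congr_fun hψ.counit_comp w
    simp only [LinearMap.comp_apply, TensorProduct.map_tmul, counit_tmul, h1, h2]

/-- Killing the left leg with the counit is a coalgebra morphism. -/
lemma coalgMor_pL :
    CoalgMor ((TensorProduct.lid k D).toLinearMap ∘ₗ
      LinearMap.rTensor D (Coalgebra.counit : C →ₗ[k] k)) := by
  constructor
  · apply TensorProduct.ext'
    intro x w
    set rx := ℛ k x
    set rw := ℛ k w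
    simp only [LinearMap.comp_apply, LinearMap.rTensor_tmul, LinearEquiv.coe_coe,
      TensorProduct.lid_tmul]
    rw [map_smul, ← (Repr.prod rx rw).eq, map_sum]
    simp only [Repr.prod, TensorProduct.map_tmul, LinearMap.comp_apply,
      LinearMap.rTensor_tmul, LinearEquiv.coe_coe, TensorProduct.lid_tmul]
    rw [Finset.sum_product, ← rw.eq, Finset.smul_sum]
    rw [Finset.sum_comm]
    refine Finset.sum_congr rfl fun j _ => ?_
    symm
    calc ∑ i ∈ rx.index,
          (Coalgebra.counit (R := k) (rx.left i) • rw.left j) ⊗ₜ[k]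
            (Coalgebra.counit (R := k) (rx.right i) • rw.right j)
        = ∑ i ∈ rx.index,
            (Coalgebra.counit (R := k) (rx.left i) * Coalgebra.counit (R := k) (rx.right i)) •
              (rw.left j ⊗ₜ[k] rw.right j) := by
          refine Finset.sum_congr rfl fun i _ => ?_
          rw [TensorProduct.tmul_smul, TensorProduct.smul_tmul', smul_smul, mul_comm, TensorProduct.smul_tmul']
      _ = Coalgebra.counit (R := k) x • (rw.left j ⊗ₜ[k] rw.right j) := by
          rw [← Finset.sum_smul, repr_counit_mul rx]
  · apply TensorProduct.ext'
    intro x w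
    simp only [LinearMap.comp_apply, LinearMap.rTensor_tmul, LinearEquiv.coe_coe,
      TensorProduct.lid_tmul, counit_tmul, map_smul, smul_eq_mul]

/-- Killing the right leg with the counit is a coalgebra morphism. -/
lemma coalgMor_pR :
    CoalgMor ((TensorProduct.rid k C).toLinearMap ∘ₗ
      LinearMap.lTensor C (Coalgebra.counit : D →ₗ[k] k)) := by
  constructor
  · apply TensorProduct.ext'
    intro x w
    set rx := ℛ k x
    set rw := ℛ k w
    simp only [LinearMap.comp_apply, LinearMap.lTensor_tmul, LinearEquiv.coe_coe,
      TensorProduct.rid_tmul]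
    rw [map_smul, ← (Repr.prod rx rw).eq, map_sum]
    simp only [Repr.prod, TensorProduct.map_tmul, LinearMap.comp_apply,
      LinearMap.lTensor_tmul, LinearEquiv.coe_coe, TensorProduct.rid_tmul]
    rw [Finset.sum_product, ← rx.eq, Finset.smul_sum]
    refine Finset.sum_congr rfl fun i _ => ?_
    symm
    calc ∑ j ∈ rw.index,
          (Coalgebra.counit (R := k) (rw.left j) • rx.left i) ⊗ₜ[k]
            (Coalgebra.counit (R := k) (rw.right j) • rx.right i)
        = ∑ j ∈ rw.index,
            (Coalgebra.counit (R := k) (rw.left j) * Coalgebra.counit (R := k) (rw.right j)) •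
              (rx.left i ⊗ₜ[k] rx.right i) := by
          refine Finset.sum_congr rfl fun j _ => ?_
          rw [TensorProduct.tmul_smul, TensorProduct.smul_tmul', smul_smul, mul_comm, TensorProduct.smul_tmul']
      _ = Coalgebra.counit (R := k) w • (rx.left i ⊗ₜ[k] rx.right i) := by
          rw [← Finset.sum_smul, repr_counit_mul rw]
  · apply TensorProduct.ext'
    intro x w
    simp only [LinearMap.comp_apply, LinearMap.lTensor_tmul, LinearEquiv.coe_coe,
      TensorProduct.rid_tmul, counit_tmul, map_smul, smul_eq_mul]
    ring

end TensorCoalg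
end TwistAux
namespace TwistAux
open Coalgebra LinearMap TensorProduct

variable {k : Type} [Field k]

section Absorb
variable {C : Type} [AddCommGroup C] [Module k C] [Coalgebra k C]
variable {D : Type} [AddCommGroup D] [Module k D] [Coalgebra k D]
variable {E : Type} [AddCommGroup E] [Module k E]
variable {V : Type} [AddCommGroup V] [Module k V]

lemma cG1 (G : C ⊗[k] E →ₗ[k] V) {x : C} (r : Coalgebra.Repr k x ι) (t : E) :
    ∑ i ∈ r.index, Coalgebra.counit (R := k) (r.left i) • G (r.right i ⊗ₜ[k] t)
      = G (x ⊗ₜ[k] t) := by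
  calc ∑ i ∈ r.index, Coalgebra.counit (R := k) (r.left i) • G (r.right i ⊗ₜ[k] t)
      = ∑ i ∈ r.index, G ((Coalgebra.counit (R := k) (r.left i) • r.right i) ⊗ₜ[k] t) := by
        refine Finset.sum_congr rfl fun i _ => ?_
        rw [← map_smul, TensorProduct.smul_tmul']
    _ = G ((∑ i ∈ r.index, Coalgebra.counit (R := k) (r.left i) • r.right i) ⊗ₜ[k] t) := by
        rw [← map_sum, ← TensorProduct.sum_tmul]
    _ = G (x ⊗ₜ[k] t) := by rw [repr_smul_counit r]

lemma cG2 (G : C ⊗[k] E →ₗ[k] V) {x : C} (r : Coalgebra.Repr k x ι) (t : E) :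
    ∑ i ∈ r.index, Coalgebra.counit (R := k) (r.right i) • G (r.left i ⊗ₜ[k] t)
      = G (x ⊗ₜ[k] t) := by
  calc ∑ i ∈ r.index, Coalgebra.counit (R := k) (r.right i) • G (r.left i ⊗ₜ[k] t)
      = ∑ i ∈ r.index, G ((Coalgebra.counit (R := k) (r.right i) • r.left i) ⊗ₜ[k] t) := by
        refine Finset.sum_congr rfl fun i _ => ?_
        rw [← map_smul, TensorProduct.smul_tmul']
    _ = G ((∑ i ∈ r.index, Coalgebra.counit (R := k) (r.right i) • r.left i) ⊗ₜ[k] t) := by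
        rw [← map_sum, ← TensorProduct.sum_tmul]
    _ = G (x ⊗ₜ[k] t) := by rw [repr_smul_counit' r]

lemma cG3 (G : E ⊗[k] C →ₗ[k] V) {x : C} (r : Coalgebra.Repr k x ι) (t : E) :
    ∑ i ∈ r.index, Coalgebra.counit (R := k) (r.left i) • G (t ⊗ₜ[k] r.right i)
      = G (t ⊗ₜ[k] x) := by
  calc ∑ i ∈ r.index, Coalgebra.counit (R := k) (r.left i) • G (t ⊗ₜ[k] r.right i)
      = ∑ i ∈ r.index, G (t ⊗ₜ[k] (Coalgebra.counit (R := k) (r.left i) • r.right i)) := by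
        refine Finset.sum_congr rfl fun i _ => ?_
        rw [← map_smul, TensorProduct.tmul_smul]
    _ = G (t ⊗ₜ[k] (∑ i ∈ r.index, Coalgebra.counit (R := k) (r.left i) • r.right i)) := by
        rw [← map_sum, ← TensorProduct.tmul_sum]
    _ = G (t ⊗ₜ[k] x) := by rw [repr_smul_counit r]

lemma cG4 (G : E ⊗[k] C →ₗ[k] V) {x : C} (r : Coalgebra.Repr k x ι) (t : E) :
    ∑ i ∈ r.index, Coalgebra.counit (R := k) (r.right i) • G (t ⊗ₜ[k] r.left i)
      = G (t ⊗ₜ[k] x) := by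
  calc ∑ i ∈ r.index, Coalgebra.counit (R := k) (r.right i) • G (t ⊗ₜ[k] r.left i)
      = ∑ i ∈ r.index, G (t ⊗ₜ[k] (Coalgebra.counit (R := k) (r.right i) • r.left i)) := by
        refine Finset.sum_congr rfl fun i _ => ?_
        rw [← map_smul, TensorProduct.tmul_smul]
    _ = G (t ⊗ₜ[k] (∑ i ∈ r.index, Coalgebra.counit (R := k) (r.right i) • r.left i)) := by
        rw [← map_sum, ← TensorProduct.tmul_sum]
    _ = G (t ⊗ₜ[k] x) := by rw [repr_smul_counit' r]

variable {A : Type} [Ring A] [Algebra k A]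
variable {B : Type} [Ring B] [Algebra k B]
variable {ι κ : Type*}

lemma absorb_left (α : D →ₗ[k] k) (f : D →ₗ[k] B) (G : C ⊗[k] B →ₗ[k] A) :
    G ∘ₗ LinearMap.lTensor C (cv (eA α) f) =
      cv (eA ((TensorProduct.lid k k).toLinearMap ∘ₗ
        TensorProduct.map Coalgebra.counit α)) (G ∘ₗ LinearMap.lTensor C f) := by
  apply TensorProduct.ext'
  intro x w
  set rx := ℛ k x
  set rw := ℛ k w
  have hL : G (x ⊗ₜ[k] cv (eA α) f w) =
      ∑ j ∈ rw.index, α (rw.left j) • G (x ⊗ₜ[k] f (rw.right j)) := by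
    rw [cv_apply _ f rw]
    rw [Finset.sum_congr rfl (fun j _ => by rw [eA_apply, smul_mul_assoc, one_mul] :
      ∀ j ∈ rw.index, eA (A := B) α (rw.left j) * f (rw.right j)
        = α (rw.left j) • f (rw.right j))]
    rw [TensorProduct.tmul_sum, map_sum]
    refine Finset.sum_congr rfl fun j _ => ?_
    rw [TensorProduct.tmul_smul, map_smul]
  simp only [LinearMap.comp_apply, LinearMap.lTensor_tmul]
  rw [hL, cv_apply _ _ (Repr.prod rx rw)]
  simp only [Repr.prod, eA_apply, LinearMap.comp_apply, TensorProduct.map_tmul,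
    TensorProduct.lid_tmul, LinearMap.lTensor_tmul, smul_eq_mul, smul_mul_assoc, one_mul]
  rw [Finset.sum_product, Finset.sum_comm]
  refine Eq.symm (Finset.sum_congr rfl fun j _ => ?_)
  calc ∑ i ∈ rx.index,
        (Coalgebra.counit (R := k) (rx.left i) * α (rw.left j)) •
          G (rx.right i ⊗ₜ[k] f (rw.right j))
      = α (rw.left j) • ∑ i ∈ rx.index,
          Coalgebra.counit (R := k) (rx.left i) • G (rx.right i ⊗ₜ[k] f (rw.right j)) := by
        rw [Finset.smul_sum]
        refine Finset.sum_congr rfl fun i _ => ?_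
        rw [smul_smul, mul_comm]
    _ = α (rw.left j) • G (x ⊗ₜ[k] f (rw.right j)) := by rw [cG1]

lemma absorb_right (α : D →ₗ[k] k) (f : D →ₗ[k] B) (G : C ⊗[k] B →ₗ[k] A) :
    G ∘ₗ LinearMap.lTensor C (cv f (eA α)) =
      cv (G ∘ₗ LinearMap.lTensor C f) (eA ((TensorProduct.lid k k).toLinearMap ∘ₗ
        TensorProduct.map Coalgebra.counit α)) := by
  apply TensorProduct.ext'
  intro x w
  set rx := ℛ k x
  set rw := ℛ k w
  have hL : G (x ⊗ₜ[k] cv f (eA α) w) =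
      ∑ j ∈ rw.index, α (rw.right j) • G (x ⊗ₜ[k] f (rw.left j)) := by
    rw [cv_apply f _ rw]
    rw [Finset.sum_congr rfl (fun j _ => by rw [eA_apply, mul_smul_comm, mul_one] :
      ∀ j ∈ rw.index, f (rw.left j) * eA (A := B) α (rw.right j)
        = α (rw.right j) • f (rw.left j))]
    rw [TensorProduct.tmul_sum, map_sum]
    refine Finset.sum_congr rfl fun j _ => ?_
    rw [TensorProduct.tmul_smul, map_smul]
  simp only [LinearMap.comp_apply, LinearMap.lTensor_tmul]
  rw [hL, cv_apply _ _ (Repr.prod rx rw)]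
  simp only [Repr.prod, eA_apply, LinearMap.comp_apply, TensorProduct.map_tmul,
    TensorProduct.lid_tmul, LinearMap.lTensor_tmul, smul_eq_mul, mul_smul_comm, mul_one]
  rw [Finset.sum_product, Finset.sum_comm]
  refine Eq.symm (Finset.sum_congr rfl fun j _ => ?_)
  calc ∑ i ∈ rx.index,
        (Coalgebra.counit (R := k) (rx.right i) * α (rw.right j)) •
          G (rx.left i ⊗ₜ[k] f (rw.left j))
      = α (rw.right j) • ∑ i ∈ rx.index,
          Coalgebra.counit (R := k) (rx.right i) • G (rx.left i ⊗ₜ[k] f (rw.left j)) := by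
        rw [Finset.smul_sum]
        refine Finset.sum_congr rfl fun i _ => ?_
        rw [smul_smul, mul_comm]
    _ = α (rw.right j) • G (x ⊗ₜ[k] f (rw.left j)) := by rw [cG2]

lemma absorb_left_r (α : D →ₗ[k] k) (f : D →ₗ[k] B) (G : B ⊗[k] C →ₗ[k] A) :
    G ∘ₗ LinearMap.rTensor C (cv (eA α) f) =
      cv (eA ((TensorProduct.lid k k).toLinearMap ∘ₗ
        TensorProduct.map α Coalgebra.counit)) (G ∘ₗ LinearMap.rTensor C f) := by
  apply TensorProduct.ext'
  intro w x
  set rx := ℛ k x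
  set rw := ℛ k w
  have hL : G (cv (eA α) f w ⊗ₜ[k] x) =
      ∑ j ∈ rw.index, α (rw.left j) • G (f (rw.right j) ⊗ₜ[k] x) := by
    rw [cv_apply _ f rw]
    rw [Finset.sum_congr rfl (fun j _ => by rw [eA_apply, smul_mul_assoc, one_mul] :
      ∀ j ∈ rw.index, eA (A := B) α (rw.left j) * f (rw.right j)
        = α (rw.left j) • f (rw.right j))]
    rw [TensorProduct.sum_tmul, map_sum]
    refine Finset.sum_congr rfl fun j _ => ?_
    rw [← TensorProduct.smul_tmul', map_smul]
  simp only [LinearMap.comp_apply, LinearMap.rTensor_tmul]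
  rw [hL, cv_apply _ _ (Repr.prod rw rx)]
  simp only [Repr.prod, eA_apply, LinearMap.comp_apply, TensorProduct.map_tmul,
    TensorProduct.lid_tmul, LinearMap.rTensor_tmul, smul_eq_mul, smul_mul_assoc, one_mul]
  rw [Finset.sum_product]
  refine Eq.symm (Finset.sum_congr rfl fun j _ => ?_)
  calc ∑ i ∈ rx.index,
        (α (rw.left j) * Coalgebra.counit (R := k) (rx.left i)) •
          G (f (rw.right j) ⊗ₜ[k] rx.right i)
      = α (rw.left j) • ∑ i ∈ rx.index,
          Coalgebra.counit (R := k) (rx.left i) • G (f (rw.right j) ⊗ₜ[k] rx.right i) := by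
        rw [Finset.smul_sum]
        refine Finset.sum_congr rfl fun i _ => ?_
        rw [smul_smul]
    _ = α (rw.left j) • G (f (rw.right j) ⊗ₜ[k] x) := by rw [cG3]

lemma absorb_right_r (α : D →ₗ[k] k) (f : D →ₗ[k] B) (G : B ⊗[k] C →ₗ[k] A) :
    G ∘ₗ LinearMap.rTensor C (cv f (eA α)) =
      cv (G ∘ₗ LinearMap.rTensor C f) (eA ((TensorProduct.lid k k).toLinearMap ∘ₗ
        TensorProduct.map α Coalgebra.counit)) := by
  apply TensorProduct.ext'
  intro w x
  set rx := ℛ k x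
  set rw := ℛ k w
  have hL : G (cv f (eA α) w ⊗ₜ[k] x) =
      ∑ j ∈ rw.index, α (rw.right j) • G (f (rw.left j) ⊗ₜ[k] x) := by
    rw [cv_apply f _ rw]
    rw [Finset.sum_congr rfl (fun j _ => by rw [eA_apply, mul_smul_comm, mul_one] :
      ∀ j ∈ rw.index, f (rw.left j) * eA (A := B) α (rw.right j)
        = α (rw.right j) • f (rw.left j))]
    rw [TensorProduct.sum_tmul, map_sum]
    refine Finset.sum_congr rfl fun j _ => ?_
    rw [← TensorProduct.smul_tmul', map_smul]
  simp only [LinearMap.comp_apply, LinearMap.rTensor_tmul]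
  rw [hL, cv_apply _ _ (Repr.prod rw rx)]
  simp only [Repr.prod, eA_apply, LinearMap.comp_apply, TensorProduct.map_tmul,
    TensorProduct.lid_tmul, LinearMap.rTensor_tmul, smul_eq_mul, mul_smul_comm, mul_one]
  rw [Finset.sum_product]
  refine Eq.symm (Finset.sum_congr rfl fun j _ => ?_)
  calc ∑ i ∈ rx.index,
        (α (rw.right j) * Coalgebra.counit (R := k) (rx.right i)) •
          G (f (rw.left j) ⊗ₜ[k] rx.left i)
      = α (rw.right j) • ∑ i ∈ rx.index,
          Coalgebra.counit (R := k) (rx.right i) • G (f (rw.left j) ⊗ₜ[k] rx.left i) := by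
        rw [Finset.smul_sum]
        refine Finset.sum_congr rfl fun i _ => ?_
        rw [smul_smul]
    _ = α (rw.right j) • G (f (rw.left j) ⊗ₜ[k] x) := by rw [cG4]

end Absorb
end TwistAux
namespace TwistAux
open Coalgebra LinearMap TensorProduct

variable {k : Type} [Field k]

section Ext3
variable {C D E V : Type} [AddCommGroup C] [Module k C] [AddCommGroup D] [Module k D]
  [AddCommGroup E] [Module k E] [AddCommGroup V] [Module k V]

lemma ext₃ {f g : C ⊗[k] (D ⊗[k] E) →ₗ[k] V}
    (h : ∀ (x : C) (y : D) (z : E), f (x ⊗ₜ[k] (y ⊗ₜ[k] z)) = g (x ⊗ₜ[k] (y ⊗ₜ[k] z))) :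
    f = g := by
  apply TensorProduct.ext'
  intro x w
  induction w using TensorProduct.induction_on with
  | zero => simp [TensorProduct.tmul_zero]
  | tmul y z => exact h x y z
  | add u v hu hv => rw [TensorProduct.tmul_add, map_add, map_add, hu, hv]

end Ext3

section Bialg
variable {H : Type} [Ring H] [HopfAlgebra k H]

lemma ttt_mul (u v : H ⊗[k] H) :
    TensorProduct.map (LinearMap.mul' k H) (LinearMap.mul' k H)
      (TensorProduct.tensorTensorTensorComm k H H H H (u ⊗ₜ[k] v)) = u * v := by
  induction u using TensorProduct.induction_on with
  | zero => simp
  | add u1 u2 h1 h2 =>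
      rw [TensorProduct.add_tmul, map_add, map_add, h1, h2, add_mul]
  | tmul a b =>
      induction v using TensorProduct.induction_on with
      | zero => simp
      | add v1 v2 h1 h2 =>
          rw [TensorProduct.tmul_add, map_add, map_add, h1, h2, mul_add]
      | tmul c d =>
          simp [TensorProduct.tensorTensorTensorComm_tmul,
            Algebra.TensorProduct.tmul_mul_tmul]

lemma coalgMor_mul : CoalgMor (k := k) (LinearMap.mul' k H) := by
  constructor
  · apply TensorProduct.ext'
    intro x y
    simp only [LinearMap.comp_apply, LinearMap.mul'_apply]
    rw [Bialgebra.comul_mul, comul_tmul, ttt_mul]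
  · apply TensorProduct.ext'
    intro x y
    simp only [LinearMap.comp_apply, LinearMap.mul'_apply, counit_tmul]
    rw [Bialgebra.counit_mul]

variable {D : Type} [AddCommGroup D] [Module k D] [Coalgebra k D]

lemma coalgMor_jl : CoalgMor (k := k) ((TensorProduct.mk k H D) 1) := by
  constructor
  · ext x
    set r := ℛ k x
    simp only [LinearMap.comp_apply, TensorProduct.mk_apply]
    rw [comul_tmul, Bialgebra.comul_one, Algebra.TensorProduct.one_def, ← r.eq]
    rw [TensorProduct.tmul_sum, map_sum, map_sum]
    refine Finset.sum_congr rfl fun i _ => ?_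
    simp [TensorProduct.tensorTensorTensorComm_tmul]
  · ext x
    simp only [LinearMap.comp_apply, TensorProduct.mk_apply, counit_tmul,
      Bialgebra.counit_one, one_mul]

lemma coalgMor_jr : CoalgMor (k := k) ((TensorProduct.mk k D H).flip 1) := by
  constructor
  · ext x
    set r := ℛ k x
    simp only [LinearMap.comp_apply, LinearMap.flip_apply, TensorProduct.mk_apply]
    rw [comul_tmul, Bialgebra.comul_one, Algebra.TensorProduct.one_def, ← r.eq]
    rw [TensorProduct.sum_tmul, map_sum, map_sum]
    refine Finset.sum_congr rfl fun i _ => ?_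
    simp [TensorProduct.tensorTensorTensorComm_tmul]
  · ext x
    simp only [LinearMap.comp_apply, LinearMap.flip_apply, TensorProduct.mk_apply, counit_tmul,
      Bialgebra.counit_one, mul_one]

end Bialg

section AssocMor
variable {C D E : Type} [AddCommGroup C] [Module k C] [Coalgebra k C]
  [AddCommGroup D] [Module k D] [Coalgebra k D] [AddCommGroup E] [Module k E] [Coalgebra k E]

lemma coalgMor_assoc_symm :
    CoalgMor (k := k) ((TensorProduct.assoc k C D E).symm.toLinearMap) := by
  have hf : (((Coalgebra.TensorProduct.assoc k k C D E).symm : C ⊗[k] (D ⊗[k] E) →ₗc[k]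
      (C ⊗[k] D) ⊗[k] E) : C ⊗[k] (D ⊗[k] E) →ₗ[k] (C ⊗[k] D) ⊗[k] E)
      = (TensorProduct.assoc k C D E).symm.toLinearMap := rfl
  constructor
  · rw [← hf]
    exact (CoalgHomClass.map_comp_comul _).symm
  · rw [← hf]
    exact CoalgHomClass.counit_comp _

end AssocMor
end TwistAux
namespace TwistAux
open Coalgebra LinearMap TensorProduct

variable {k H : Type} [Field k] [Ring H] [HopfAlgebra k H]

lemma lTensor_eq {C E V : Type} [AddCommGroup C] [Module k C] [AddCommGroup E] [Module k E]
    [AddCommGroup V] [Module k V] (f : E →ₗ[k] V) :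
    LinearMap.lTensor C f = TensorProduct.map LinearMap.id f := rfl

lemma rTensor_eq {C E V : Type} [AddCommGroup C] [Module k C] [AddCommGroup E] [Module k E]
    [AddCommGroup V] [Module k V] (f : E →ₗ[k] V) :
    LinearMap.rTensor C f = TensorProduct.map f LinearMap.id := rfl

lemma twistedMul_eq (σ σinv : H ⊗[k] H →ₗ[k] k) :
    twistedMul σ σinv = cv (eA σ) (cv (LinearMap.mul' k H) (eA σinv)) := by
  refine LinearMap.ext fun c => ?_
  set r := ℛ k c
  set ri : (i : r.ι) → Coalgebra.Repr k (r.right i) ((H ⊗[k] H) × (H ⊗[k] H)) := fun i => ℛ k (r.right i)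
  have hR : cv (eA σ) (cv (LinearMap.mul' k H) (eA σinv)) c
      = ∑ i ∈ r.index, σ (r.left i) • ∑ j ∈ (ri i).index,
          σinv ((ri i).right j) • (LinearMap.mul' k H) ((ri i).left j) := by
    rw [cv_apply _ _ r]
    refine Finset.sum_congr rfl fun i _ => ?_
    rw [eA_apply, smul_mul_assoc, one_mul, cv_apply _ _ (ri i)]
    refine congrArg _ (Finset.sum_congr rfl fun j _ => ?_)
    rw [eA_apply, mul_smul_comm, mul_one]
  rw [hR, twistedMul]
  simp only [LinearMap.comp_apply]
  rw [← r.eq, map_sum, map_sum, map_sum]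
  refine Finset.sum_congr rfl fun i _ => ?_
  rw [LinearMap.lTensor_tmul, ← (ri i).eq, TensorProduct.tmul_sum, map_sum, map_sum]
  simp only [TensorProduct.map_tmul, LinearMap.comp_apply, LinearMap.mul'_apply,
    TensorProduct.rid_tmul, TensorProduct.lid_tmul, LinearEquiv.coe_coe]
  rw [Finset.smul_sum]

end TwistAux
namespace TwistAux
open Coalgebra LinearMap TensorProduct

variable {k : Type} [Field k]

section ConvPair
variable {C : Type} [AddCommGroup C] [Module k C] [Coalgebra k C]
variable {D : Type} [AddCommGroup D] [Module k D] [Coalgebra k D]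

lemma conv_pair {φ : C →ₗ[k] D} (hφ : CoalgMor φ) {σ τ : D →ₗ[k] k}
    (h : conv σ τ = Coalgebra.counit) :
    conv (σ ∘ₗ φ) (τ ∘ₗ φ) = Coalgebra.counit := by
  rw [← conv_comp hφ, h, hφ.counit_comp]

end ConvPair

variable {H : Type} [Ring H] [HopfAlgebra k H]

lemma epsSigma_eq (σ : H ⊗[k] H →ₗ[k] k) :
    epsSigma (k := k) σ = σ ∘ₗ ((TensorProduct.lid k (H ⊗[k] H)).toLinearMap ∘ₗ
      LinearMap.rTensor (H ⊗[k] H) (Coalgebra.counit : H →ₗ[k] k)) := by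
  apply TensorProduct.ext'
  intro x w
  simp [epsSigma, smul_eq_mul]

lemma sigmaEps_eq (σ : H ⊗[k] H →ₗ[k] k) :
    sigmaEps (k := k) σ = σ ∘ₗ (((TensorProduct.rid k (H ⊗[k] H)).toLinearMap ∘ₗ
      LinearMap.lTensor (H ⊗[k] H) (Coalgebra.counit : H →ₗ[k] k)) ∘ₗ
        (TensorProduct.assoc k H H H).symm.toLinearMap) := by
  apply ext₃
  intro x y z
  simp [sigmaEps, smul_eq_mul, mul_comm]

lemma mulSigma_eq (σ : H ⊗[k] H →ₗ[k] k) :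
    mulSigma (k := k) σ = σ ∘ₗ LinearMap.lTensor H (LinearMap.mul' k H) := rfl

lemma sigmaMul_eq (σ : H ⊗[k] H →ₗ[k] k) :
    sigmaMul (k := k) σ = σ ∘ₗ (LinearMap.rTensor H (LinearMap.mul' k H) ∘ₗ
      (TensorProduct.assoc k H H H).symm.toLinearMap) := rfl

lemma coalgMor_lm : CoalgMor (k := k) (LinearMap.lTensor H (LinearMap.mul' k H)) := by
  rw [lTensor_eq]
  exact coalgMor_map coalgMor_id coalgMor_mul

lemma coalgMor_rm_as : CoalgMor (k := k) (LinearMap.rTensor H (LinearMap.mul' k H) ∘ₗ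
    (TensorProduct.assoc k H H H).symm.toLinearMap) := by
  refine coalgMor_comp ?_ coalgMor_assoc_symm
  rw [rTensor_eq]
  exact coalgMor_map coalgMor_mul coalgMor_id

lemma coalgMor_pL3 : CoalgMor (k := k) ((TensorProduct.lid k (H ⊗[k] H)).toLinearMap ∘ₗ
    LinearMap.rTensor (H ⊗[k] H) (Coalgebra.counit : H →ₗ[k] k)) := coalgMor_pL

lemma coalgMor_pR3_as : CoalgMor (k := k) (((TensorProduct.rid k (H ⊗[k] H)).toLinearMap ∘ₗ
    LinearMap.lTensor (H ⊗[k] H) (Coalgebra.counit : H →ₗ[k] k)) ∘ₗ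
      (TensorProduct.assoc k H H H).symm.toLinearMap) :=
  coalgMor_comp coalgMor_pR coalgMor_assoc_symm

variable {A : Type} [Ring A] [Algebra k A]

lemma merge {C : Type} [AddCommGroup C] [Module k C] [Coalgebra k C]
    (a₁ a₂ a₃ a₄ : C →ₗ[k] k) (M : C →ₗ[k] A) :
    cv (eA a₁) (cv (cv (eA a₂) (cv M (eA a₃))) (eA a₄))
      = cv (eA (conv a₁ a₂)) (cv M (eA (conv a₃ a₄))) := by
  rw [eA_conv a₁ a₂, eA_conv a₃ a₄]
  rw [cv_assoc (eA a₂) (cv M (eA a₃)) (eA a₄)]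
  rw [cv_assoc M (eA a₃) (eA a₄)]
  rw [← cv_assoc (eA a₁) (eA a₂)]

lemma mulAssoc3 :
    LinearMap.mul' k H ∘ₗ (LinearMap.rTensor H (LinearMap.mul' k H) ∘ₗ
        (TensorProduct.assoc k H H H).symm.toLinearMap)
      = LinearMap.mul' k H ∘ₗ LinearMap.lTensor H (LinearMap.mul' k H) := by
  apply ext₃
  intro x y z
  simp [mul_assoc]

lemma expandL (σ σinv : H ⊗[k] H →ₗ[k] k) :
    twistedMul σ σinv ∘ₗ LinearMap.lTensor H (twistedMul σ σinv) =
      cv (eA (conv (epsSigma σ) (mulSigma σ)))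
        (cv (LinearMap.mul' k H ∘ₗ LinearMap.lTensor H (LinearMap.mul' k H))
          (eA (conv (mulSigma σinv) (epsSigma σinv)))) := by
  rw [twistedMul_eq]
  rw [absorb_left σ (cv (LinearMap.mul' k H) (eA σinv))
    (cv (eA σ) (cv (LinearMap.mul' k H) (eA σinv)))]
  rw [absorb_right σinv (LinearMap.mul' k H)
    (cv (eA σ) (cv (LinearMap.mul' k H) (eA σinv)))]
  rw [cv_comp coalgMor_lm (eA σ) (cv (LinearMap.mul' k H) (eA σinv))]
  rw [cv_comp coalgMor_lm (LinearMap.mul' k H) (eA σinv)]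
  rw [eA_comp σ, eA_comp σinv]
  have heps : ∀ τ : H ⊗[k] H →ₗ[k] k, (TensorProduct.lid k k).toLinearMap ∘ₗ
      TensorProduct.map Coalgebra.counit τ = epsSigma (k := k) τ := fun τ => rfl
  have hms : ∀ τ : H ⊗[k] H →ₗ[k] k,
      τ ∘ₗ LinearMap.lTensor H (LinearMap.mul' k H) = mulSigma (k := k) τ := fun τ => rfl
  rw [heps σ, heps σinv, hms σ, hms σinv]
  exact merge _ _ _ _ _

lemma expandR (σ σinv : H ⊗[k] H →ₗ[k] k) :
    (twistedMul σ σinv ∘ₗ LinearMap.rTensor H (twistedMul σ σinv)) ∘ₗ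
        (TensorProduct.assoc k H H H).symm.toLinearMap =
      cv (eA (conv (sigmaEps σ) (sigmaMul σ)))
        (cv (LinearMap.mul' k H ∘ₗ LinearMap.lTensor H (LinearMap.mul' k H))
          (eA (conv (sigmaMul σinv) (sigmaEps σinv)))) := by
  rw [twistedMul_eq]
  rw [absorb_left_r σ (cv (LinearMap.mul' k H) (eA σinv))
    (cv (eA σ) (cv (LinearMap.mul' k H) (eA σinv)))]
  rw [absorb_right_r σinv (LinearMap.mul' k H)
    (cv (eA σ) (cv (LinearMap.mul' k H) (eA σinv)))]
  have coalgMor_rm : CoalgMor (k := k) (LinearMap.rTensor H (LinearMap.mul' k H)) := by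
    rw [rTensor_eq]
    exact coalgMor_map coalgMor_mul coalgMor_id
  rw [cv_comp coalgMor_rm (eA σ) (cv (LinearMap.mul' k H) (eA σinv))]
  rw [cv_comp coalgMor_rm (LinearMap.mul' k H) (eA σinv)]
  -- compose with assoc.symm
  rw [cv_comp coalgMor_assoc_symm]
  rw [cv_comp coalgMor_assoc_symm]
  rw [cv_comp coalgMor_assoc_symm]
  rw [cv_comp coalgMor_assoc_symm]
  simp only [eA_comp, LinearMap.comp_assoc]
  have h1 : (TensorProduct.lid k k).toLinearMap ∘ₗ (TensorProduct.map σ Coalgebra.counit ∘ₗ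
      (TensorProduct.assoc k H H H).symm.toLinearMap) = sigmaEps (k := k) σ := rfl
  have h1' : (TensorProduct.lid k k).toLinearMap ∘ₗ (TensorProduct.map σinv Coalgebra.counit ∘ₗ
      (TensorProduct.assoc k H H H).symm.toLinearMap) = sigmaEps (k := k) σinv := rfl
  have h2 : σ ∘ₗ (LinearMap.rTensor H (LinearMap.mul' k H) ∘ₗ
      (TensorProduct.assoc k H H H).symm.toLinearMap) = sigmaMul (k := k) σ :=
    (sigmaMul_eq σ).symm
  have h2' : σinv ∘ₗ (LinearMap.rTensor H (LinearMap.mul' k H) ∘ₗ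
      (TensorProduct.assoc k H H H).symm.toLinearMap) = sigmaMul (k := k) σinv :=
    (sigmaMul_eq σinv).symm
  rw [h1, h1', h2, h2', mulAssoc3]
  exact merge _ _ _ _ _

end TwistAux
namespace TwistAux
open Coalgebra LinearMap TensorProduct

variable {k H : Type} [Field k] [Ring H] [HopfAlgebra k H]

lemma invSide (σ σinv : H ⊗[k] H →ₗ[k] k)
    (hcoc : conv (sigmaEps σ) (sigmaMul σ) = conv (epsSigma σ) (mulSigma σ))
    (hinv₁ : conv σ σinv = Coalgebra.counit) (hinv₂ : conv σinv σ = Coalgebra.counit) :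
    conv (mulSigma σinv) (epsSigma σinv) = conv (sigmaMul σinv) (sigmaEps σinv) := by
  have h1 : conv (mulSigma (k := k) σ) (mulSigma σinv) = Coalgebra.counit := by
    rw [mulSigma_eq σ, mulSigma_eq σinv]; exact conv_pair coalgMor_lm hinv₁
  have h2 : conv (mulSigma (k := k) σinv) (mulSigma σ) = Coalgebra.counit := by
    rw [mulSigma_eq σ, mulSigma_eq σinv]; exact conv_pair coalgMor_lm hinv₂
  have h3 : conv (epsSigma (k := k) σ) (epsSigma σinv) = Coalgebra.counit := by
    rw [epsSigma_eq σ, epsSigma_eq σinv]; exact conv_pair coalgMor_pL3 hinv₁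
  have h4 : conv (epsSigma (k := k) σinv) (epsSigma σ) = Coalgebra.counit := by
    rw [epsSigma_eq σ, epsSigma_eq σinv]; exact conv_pair coalgMor_pL3 hinv₂
  have h5 : conv (sigmaMul (k := k) σ) (sigmaMul σinv) = Coalgebra.counit := by
    rw [sigmaMul_eq σ, sigmaMul_eq σinv]; exact conv_pair coalgMor_rm_as hinv₁
  have h7 : conv (sigmaEps (k := k) σ) (sigmaEps σinv) = Coalgebra.counit := by
    rw [sigmaEps_eq σ, sigmaEps_eq σinv]; exact conv_pair coalgMor_pR3_as hinv₁
  have hba : conv (conv (mulSigma (k := k) σinv) (epsSigma σinv))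
      (conv (epsSigma σ) (mulSigma σ)) = Coalgebra.counit := by
    rw [conv_assoc, ← conv_assoc (epsSigma (k := k) σinv) (epsSigma σ) (mulSigma σ),
      h4, conv_unit_left, h2]
  have ha'b' : conv (conv (sigmaEps (k := k) σ) (sigmaMul σ))
      (conv (sigmaMul σinv) (sigmaEps σinv)) = Coalgebra.counit := by
    rw [conv_assoc, ← conv_assoc (sigmaMul (k := k) σ) (sigmaMul σinv) (sigmaEps σinv),
      h5, conv_unit_left, h7]
  calc conv (mulSigma (k := k) σinv) (epsSigma σinv)
      = conv (conv (mulSigma (k := k) σinv) (epsSigma σinv)) Coalgebra.counit :=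
        (conv_unit_right _).symm
    _ = conv (conv (mulSigma (k := k) σinv) (epsSigma σinv))
          (conv (conv (sigmaEps σ) (sigmaMul σ)) (conv (sigmaMul σinv) (sigmaEps σinv))) := by
        rw [ha'b']
    _ = conv (conv (mulSigma (k := k) σinv) (epsSigma σinv))
          (conv (conv (epsSigma σ) (mulSigma σ)) (conv (sigmaMul σinv) (sigmaEps σinv))) := by
        rw [hcoc]
    _ = conv (conv (conv (mulSigma (k := k) σinv) (epsSigma σinv))
          (conv (epsSigma σ) (mulSigma σ))) (conv (sigmaMul σinv) (sigmaEps σinv)) :=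
        (conv_assoc _ _ _).symm
    _ = conv Coalgebra.counit (conv (sigmaMul (k := k) σinv) (sigmaEps σinv)) := by rw [hba]
    _ = conv (sigmaMul (k := k) σinv) (sigmaEps σinv) := conv_unit_left _

lemma mul_jl : LinearMap.mul' k H ∘ₗ (TensorProduct.mk k H H) 1 = LinearMap.id := by
  refine LinearMap.ext fun x => ?_
  simp

lemma mul_jr : LinearMap.mul' k H ∘ₗ (TensorProduct.mk k H H).flip 1 = LinearMap.id := by
  refine LinearMap.ext fun x => ?_
  simp

lemma sigma_jl (σ σinv : H ⊗[k] H →ₗ[k] k) (hnorm : σ (1 ⊗ₜ[k] 1) = 1)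
    (hcoc : conv (sigmaEps σ) (sigmaMul σ) = conv (epsSigma σ) (mulSigma σ))
    (hinv₁ : conv σ σinv = Coalgebra.counit) :
    σ ∘ₗ (TensorProduct.mk k H H) 1 = Coalgebra.counit ∧
      σinv ∘ₗ (TensorProduct.mk k H H) 1 = Coalgebra.counit := by
  set ψ : H →ₗ[k] H ⊗[k] (H ⊗[k] H) :=
    (TensorProduct.mk k H (H ⊗[k] H)) 1 ∘ₗ (TensorProduct.mk k H H) 1 with hψ
  have hψm : CoalgMor (k := k) ψ := coalgMor_comp coalgMor_jl coalgMor_jl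
  have step : conv (sigmaEps σ ∘ₗ ψ) (sigmaMul σ ∘ₗ ψ)
      = conv (epsSigma σ ∘ₗ ψ) (mulSigma σ ∘ₗ ψ) := by
    rw [← conv_comp hψm, ← conv_comp hψm, hcoc]
  have cA : sigmaEps (k := k) σ ∘ₗ ψ = Coalgebra.counit := by
    refine LinearMap.ext fun z => ?_
    simp [sigmaEps, hψ, hnorm, smul_eq_mul]
  have cB : sigmaMul (k := k) σ ∘ₗ ψ = σ ∘ₗ (TensorProduct.mk k H H) 1 := by
    refine LinearMap.ext fun z => ?_
    simp [sigmaMul, hψ]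
  have cC : epsSigma (k := k) σ ∘ₗ ψ = σ ∘ₗ (TensorProduct.mk k H H) 1 := by
    refine LinearMap.ext fun z => ?_
    simp [epsSigma, hψ]
  have cD : mulSigma (k := k) σ ∘ₗ ψ = σ ∘ₗ (TensorProduct.mk k H H) 1 := by
    refine LinearMap.ext fun z => ?_
    simp [mulSigma, hψ]
  rw [cA, cB, cC, cD, conv_unit_left] at step
  -- step : σ∘jl = conv (σ∘jl) (σ∘jl)
  have einv : conv (σ ∘ₗ (TensorProduct.mk k H H) 1) (σinv ∘ₗ (TensorProduct.mk k H H) 1)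
      = Coalgebra.counit := conv_pair coalgMor_jl hinv₁
  have he : σ ∘ₗ (TensorProduct.mk k H H) 1 = Coalgebra.counit := by
    calc σ ∘ₗ (TensorProduct.mk k H H) 1
        = conv (σ ∘ₗ (TensorProduct.mk k H H) 1) Coalgebra.counit := (conv_unit_right _).symm
      _ = conv (σ ∘ₗ (TensorProduct.mk k H H) 1)
            (conv (σ ∘ₗ (TensorProduct.mk k H H) 1) (σinv ∘ₗ (TensorProduct.mk k H H) 1)) := by
          rw [einv]
      _ = conv (conv (σ ∘ₗ (TensorProduct.mk k H H) 1) (σ ∘ₗ (TensorProduct.mk k H H) 1))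
            (σinv ∘ₗ (TensorProduct.mk k H H) 1) := (conv_assoc _ _ _).symm
      _ = conv (σ ∘ₗ (TensorProduct.mk k H H) 1) (σinv ∘ₗ (TensorProduct.mk k H H) 1) := by
          rw [← step]
      _ = Coalgebra.counit := einv
  refine ⟨he, ?_⟩
  rw [he, conv_unit_left] at einv
  exact einv

lemma sigma_jr (σ σinv : H ⊗[k] H →ₗ[k] k) (hnorm : σ (1 ⊗ₜ[k] 1) = 1)
    (hcoc : conv (sigmaEps σ) (sigmaMul σ) = conv (epsSigma σ) (mulSigma σ))
    (hinv₁ : conv σ σinv = Coalgebra.counit) :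
    σ ∘ₗ (TensorProduct.mk k H H).flip 1 = Coalgebra.counit ∧
      σinv ∘ₗ (TensorProduct.mk k H H).flip 1 = Coalgebra.counit := by
  set ψ : H →ₗ[k] H ⊗[k] (H ⊗[k] H) :=
    TensorProduct.map LinearMap.id ((TensorProduct.mk k H H) 1) ∘ₗ
      (TensorProduct.mk k H H).flip 1 with hψ
  have hψm : CoalgMor (k := k) ψ :=
    coalgMor_comp (coalgMor_map coalgMor_id coalgMor_jl) coalgMor_jr
  have step : conv (sigmaEps σ ∘ₗ ψ) (sigmaMul σ ∘ₗ ψ)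
      = conv (epsSigma σ ∘ₗ ψ) (mulSigma σ ∘ₗ ψ) := by
    rw [← conv_comp hψm, ← conv_comp hψm, hcoc]
  have cA : sigmaEps (k := k) σ ∘ₗ ψ = σ ∘ₗ (TensorProduct.mk k H H).flip 1 := by
    refine LinearMap.ext fun z => ?_
    simp [sigmaEps, hψ, smul_eq_mul]
  have cB : sigmaMul (k := k) σ ∘ₗ ψ = σ ∘ₗ (TensorProduct.mk k H H).flip 1 := by
    refine LinearMap.ext fun z => ?_
    simp [sigmaMul, hψ]
  have cC : epsSigma (k := k) σ ∘ₗ ψ = Coalgebra.counit := by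
    refine LinearMap.ext fun z => ?_
    simp [epsSigma, hψ, hnorm, smul_eq_mul]
  have cD : mulSigma (k := k) σ ∘ₗ ψ = σ ∘ₗ (TensorProduct.mk k H H).flip 1 := by
    refine LinearMap.ext fun z => ?_
    simp [mulSigma, hψ]
  rw [cA, cB, cC, cD, conv_unit_left] at step
  have einv : conv (σ ∘ₗ (TensorProduct.mk k H H).flip 1)
      (σinv ∘ₗ (TensorProduct.mk k H H).flip 1) = Coalgebra.counit :=
    conv_pair coalgMor_jr hinv₁
  have he : σ ∘ₗ (TensorProduct.mk k H H).flip 1 = Coalgebra.counit := by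
    calc σ ∘ₗ (TensorProduct.mk k H H).flip 1
        = conv (σ ∘ₗ (TensorProduct.mk k H H).flip 1) Coalgebra.counit :=
          (conv_unit_right _).symm
      _ = conv (σ ∘ₗ (TensorProduct.mk k H H).flip 1)
            (conv (σ ∘ₗ (TensorProduct.mk k H H).flip 1)
              (σinv ∘ₗ (TensorProduct.mk k H H).flip 1)) := by rw [einv]
      _ = conv (conv (σ ∘ₗ (TensorProduct.mk k H H).flip 1)
            (σ ∘ₗ (TensorProduct.mk k H H).flip 1))
            (σinv ∘ₗ (TensorProduct.mk k H H).flip 1) := (conv_assoc _ _ _).symm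
      _ = conv (σ ∘ₗ (TensorProduct.mk k H H).flip 1)
            (σinv ∘ₗ (TensorProduct.mk k H H).flip 1) := by rw [step]
      _ = Coalgebra.counit := einv
  refine ⟨he, ?_⟩
  rw [he, conv_unit_left] at einv
  exact einv

end TwistAux
namespace TwistAux
open Coalgebra LinearMap TensorProduct

variable {k H : Type} [Field k] [Ring H] [HopfAlgebra k H]

lemma incl_cv {C : Type} [AddCommGroup C] [Module k C] [Coalgebra k C] (f g : C →ₗ[k] H) :
    cv ((Algebra.TensorProduct.includeLeft : H →ₐ[k] H ⊗[k] H).toLinearMap ∘ₗ f)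
        ((Algebra.TensorProduct.includeRight : H →ₐ[k] H ⊗[k] H).toLinearMap ∘ₗ g)
      = TensorProduct.map f g ∘ₗ Coalgebra.comul := by
  refine LinearMap.ext fun c => ?_
  set r := ℛ k c
  rw [cv_apply _ _ r]
  simp only [LinearMap.comp_apply, ← r.eq, map_sum, TensorProduct.map_tmul]
  refine Finset.sum_congr rfl fun i _ => ?_
  simp [Algebra.TensorProduct.includeLeft_apply, Algebra.TensorProduct.includeRight_apply,
    Algebra.TensorProduct.tmul_mul_tmul]

lemma middle_cancel {C : Type} [AddCommGroup C] [Module k C] [Coalgebra k C]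
    {A : Type} [Ring A] [Algebra k A] (σ σinv : C →ₗ[k] k)
    (hinv₂ : conv σinv σ = Coalgebra.counit) (X Y : C →ₗ[k] A) :
    cv (cv (eA σ) (cv X (eA σinv))) (cv (eA σ) (cv Y (eA σinv)))
      = cv (eA σ) (cv (cv X Y) (eA σinv)) := by
  rw [cv_assoc (eA σ) (cv X (eA σinv)) (cv (eA σ) (cv Y (eA σinv)))]
  rw [cv_assoc X (eA σinv) (cv (eA σ) (cv Y (eA σinv)))]
  rw [← cv_assoc (eA σinv) (eA σ) (cv Y (eA σinv))]
  rw [← eA_conv σinv σ, hinv₂]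
  rw [cv_unit_left]
  rw [← cv_assoc X Y (eA σinv)]

lemma comul_L (σ σinv : H ⊗[k] H →ₗ[k] k) (hinv₂ : conv σinv σ = Coalgebra.counit) :
    Coalgebra.comul ∘ₗ twistedMul σ σinv =
      TensorProduct.map (twistedMul σ σinv) (twistedMul σ σinv) ∘ₗ
        Coalgebra.comul (R := k) (A := H ⊗[k] H) := by
  rw [twistedMul_eq]
  have hΔ : (Bialgebra.comulAlgHom k H).toLinearMap = (Coalgebra.comul : H →ₗ[k] H ⊗[k] H) := rfl
  rw [← hΔ, algHom_cv, algHom_cv, algHom_eA, algHom_eA, hΔ]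
  rw [coalgMor_mul.comul_comp]
  rw [← incl_cv (LinearMap.mul' k H) (LinearMap.mul' k H)]
  rw [← incl_cv (cv (eA σ) (cv (LinearMap.mul' k H) (eA σinv)))
    (cv (eA σ) (cv (LinearMap.mul' k H) (eA σinv)))]
  rw [algHom_cv, algHom_cv, algHom_cv, algHom_cv, algHom_eA, algHom_eA, algHom_eA, algHom_eA]
  exact (middle_cancel σ σinv hinv₂ _ _).symm

lemma counit_L (σ σinv : H ⊗[k] H →ₗ[k] k) (hinv₁ : conv σ σinv = Coalgebra.counit) :
    Coalgebra.counit ∘ₗ twistedMul σ σinv =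
      (TensorProduct.lid k k).toLinearMap ∘ₗ
        TensorProduct.map (Coalgebra.counit : H →ₗ[k] k) Coalgebra.counit := by
  rw [twistedMul_eq]
  have hε : (Bialgebra.counitAlgHom k H).toLinearMap = (Coalgebra.counit : H →ₗ[k] k) := rfl
  rw [← hε, algHom_cv, algHom_cv, algHom_eA, algHom_eA, hε]
  rw [coalgMor_mul.counit_comp]
  rw [eA_k, eA_k, ← conv_eq, ← conv_eq, conv_unit_left, hinv₁]
  have : (Coalgebra.counit : H ⊗[k] H →ₗ[k] k)
      = LinearMap.mul' k k ∘ₗ TensorProduct.map Coalgebra.counit Coalgebra.counit := by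
    apply TensorProduct.ext'; intro a b; simp [mul_comm]
  rw [this, lid_eq_mul']

lemma twisted_one_left (σ σinv : H ⊗[k] H →ₗ[k] k) (hnorm : σ (1 ⊗ₜ[k] 1) = 1)
    (hcoc : conv (sigmaEps σ) (sigmaMul σ) = conv (epsSigma σ) (mulSigma σ))
    (hinv₁ : conv σ σinv = Coalgebra.counit) :
    twistedMul σ σinv ∘ₗ (TensorProduct.mk k H H) 1 = LinearMap.id := by
  obtain ⟨h1, h2⟩ := sigma_jl σ σinv hnorm hcoc hinv₁
  rw [twistedMul_eq]
  rw [cv_comp coalgMor_jl, cv_comp coalgMor_jl, eA_comp, eA_comp, mul_jl, h1, h2]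
  rw [cv_unit_left]
  have : cv (LinearMap.id : H →ₗ[k] H) (eA Coalgebra.counit) = LinearMap.id :=
    cv_unit_right _
  rw [this]

lemma twisted_one_right (σ σinv : H ⊗[k] H →ₗ[k] k) (hnorm : σ (1 ⊗ₜ[k] 1) = 1)
    (hcoc : conv (sigmaEps σ) (sigmaMul σ) = conv (epsSigma σ) (mulSigma σ))
    (hinv₁ : conv σ σinv = Coalgebra.counit) :
    twistedMul σ σinv ∘ₗ (TensorProduct.mk k H H).flip 1 = LinearMap.id := by
  obtain ⟨h1, h2⟩ := sigma_jr σ σinv hnorm hcoc hinv₁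
  rw [twistedMul_eq]
  rw [cv_comp coalgMor_jr, cv_comp coalgMor_jr, eA_comp, eA_comp, mul_jr, h1, h2]
  rw [cv_unit_left]
  have : cv (LinearMap.id : H →ₗ[k] H) (eA Coalgebra.counit) = LinearMap.id :=
    cv_unit_right _
  rw [this]

end TwistAux
open TwistAux

/-- If σ is a Hopf 2-cocycle on a Hopf algebra A (with convolution
inverse σ⁻¹), then the twisted multiplication
`x · y = Σ σ(x₍₁₎, y₍₁₎) x₍₂₎ y₍₂₎ σ⁻¹(x₍₃₎, y₍₃₎)` is associative with unit 1,
and the original comultiplication and counit are (co)multiplicative with respect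
to it, i.e. A_σ is a bialgebra. -/
theorem twistedMul_bialgebra (σ σinv : H ⊗[k] H →ₗ[k] k)
    (hσ : IsHopfTwoCocycle σ)
    (hinv₁ : conv σ σinv = Coalgebra.counit) (hinv₂ : conv σinv σ = Coalgebra.counit) :
    -- associativity: x · (y · z) = (x · y) · z
    (twistedMul σ σinv ∘ₗ LinearMap.lTensor H (twistedMul σ σinv) =
      twistedMul σ σinv ∘ₗ LinearMap.rTensor H (twistedMul σ σinv) ∘ₗ
        (TensorProduct.assoc k H H H).symm.toLinearMap) ∧
    -- 1 is a unit for the twisted multiplication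
    (∀ x : H, twistedMul σ σinv ((1 : H) ⊗ₜ[k] x) = x ∧
      twistedMul σ σinv (x ⊗ₜ[k] (1 : H)) = x) ∧
    -- the comultiplication is multiplicative for the twisted product
    (Coalgebra.comul ∘ₗ twistedMul σ σinv =
      TensorProduct.map (twistedMul σ σinv) (twistedMul σ σinv) ∘ₗ
        Coalgebra.comul (R := k) (A := H ⊗[k] H)) ∧
    -- the counit is multiplicative for the twisted product
    (Coalgebra.counit ∘ₗ twistedMul σ σinv =
      (TensorProduct.lid k k).toLinearMap ∘ₗ
        TensorProduct.map (Coalgebra.counit : H →ₗ[k] k) Coalgebra.counit) := by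
  obtain ⟨-, hnorm, hcoc⟩ := hσ
  refine ⟨?_, ?_, comul_L σ σinv hinv₂, counit_L σ σinv hinv₁⟩
  · rw [← LinearMap.comp_assoc]
    rw [expandL σ σinv, expandR σ σinv]
    rw [hcoc, invSide σ σinv hcoc hinv₁ hinv₂]
  · intro x
    constructor
    · have h := LinearMap.congr_fun (twisted_one_left σ σinv hnorm hcoc hinv₁) x
      simpa using h
    · have h := LinearMap.congr_fun (twisted_one_right σ σinv hnorm hcoc hinv₁) x
      simpa using h

end
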